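/- Let x = μ_j + z with z ~ N(0, σ²I_d), and suppose candidate centers ν_i, ν_j satisfy ‖ν_i − μ_i‖ ≤ σ/C_{ij} and ‖ν_j − μ_j‖ ≤ σ/C_{ij}, where ‖μ_i − μ_j‖ = C_{ij}σ with C_{ij} sufficiently large. Then P[‖x − ν_i‖ ≤ ‖x − ν_j‖] ≤ O(1)·exp(−C_{ij}²/8). -/

import Mathlib

open MeasureTheory ProbabilityTheory
open scoped RealInnerProductSpace

/-- `z` is a centered spherical Gaussian vector with per-coordinate variance `σ²`:
every one-dimensional projection `⟪v, z⟫` is Gaussian with variance `σ² ‖v‖²`. -/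
def IsSphericalGaussian {Ω : Type*} [MeasurableSpace Ω] (P : Measure Ω) {d : ℕ}
    (z : Ω → EuclideanSpace ℝ (Fin d)) (σ : ℝ) : Prop :=
  ∀ v : EuclideanSpace ℝ (Fin d),
    Measure.map (fun ω => ⟪v, z ω⟫) P = gaussianReal 0 (Real.toNNReal (σ^2 * ‖v‖^2))

/-!
With `x = μj + z`, the event `‖x - νi‖ ≤ ‖x - νj‖` is the half-space `t ≤ ⟪νi - νj, z⟫`, where
`t = (‖μj - νi‖² - ‖μj - νj‖²) / 2 ≥ σ² (C² - 2) / 2` by the triangle inequality. The projection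
`⟪νi - νj, z⟫` is a centred Gaussian of variance at most `σ² (Cσ + 2σ/C)²`, so the Chernoff bound
for sub-Gaussian variables bounds the probability by `exp (-C² (C² - 2)² / (8 (C² + 2)²))`, which is
at most `e · exp (-C² / 8)`.
-/

open Real
open scoped NNReal

lemma hasSubgaussianMGF_of_map_eq_gaussianReal {Ω : Type*} [MeasurableSpace Ω] {P : Measure Ω}
    [IsProbabilityMeasure P] {X : Ω → ℝ} {v c : ℝ≥0} (hX : P.map X = gaussianReal 0 v)
    (hvc : v ≤ c) : HasSubgaussianMGF X c P where
  integrable_exp_mul t := by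
    rw [← mgf_pos_iff, mgf_gaussianReal hX]
    exact exp_pos _
  mgf_le t := by
    rw [mgf_gaussianReal hX, zero_mul, zero_add]
    gcongr

lemma IsSphericalGaussian.hasSubgaussianMGF_inner {Ω : Type*} [MeasurableSpace Ω]
    {P : Measure Ω} [IsProbabilityMeasure P] {d : ℕ} {z : Ω → EuclideanSpace ℝ (Fin d)} {σ r : ℝ}
    (hz : IsSphericalGaussian P z σ) {v : EuclideanSpace ℝ (Fin d)} (hv : ‖v‖ ≤ r) :
    HasSubgaussianMGF (fun ω => ⟪v, z ω⟫) (Real.toNNReal (σ ^ 2 * r ^ 2)) P :=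
  hasSubgaussianMGF_of_map_eq_gaussianReal (hz v) (by gcongr)

section Geometry

variable {E : Type*}

lemma norm_add_sub_le_norm_add_sub_iff [NormedAddCommGroup E] [InnerProductSpace ℝ E]
    (m z p q : E) :
    ‖m + z - p‖ ≤ ‖m + z - q‖ ↔ (‖m - p‖ ^ 2 - ‖m - q‖ ^ 2) / 2 ≤ ⟪p - q, z⟫ := by
  have hp : ‖m + z - p‖ ^ 2 = ‖m - p‖ ^ 2 + 2 * ⟪m - p, z⟫ + ‖z‖ ^ 2 := by
    rw [← norm_add_sq_real]; congr 2; abel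
  have hq : ‖m + z - q‖ ^ 2 = ‖m - q‖ ^ 2 + 2 * ⟪m - q, z⟫ + ‖z‖ ^ 2 := by
    rw [← norm_add_sq_real]; congr 2; abel
  have hpq : ⟪p - q, z⟫ = ⟪m - q, z⟫ - ⟪m - p, z⟫ := by
    rw [← inner_sub_left]; congr 1; abel
  rw [← pow_le_pow_iff_left₀ (norm_nonneg _) (norm_nonneg _) two_ne_zero, hp, hq, hpq]
  constructor <;> intro h <;> linarith

variable [SeminormedAddCommGroup E] {μi μj νi νj : E} {D δ : ℝ}

lemma sq_sub_two_mul_le_norm_sub_sq_sub_norm_sub_sq (hμ : D ≤ ‖μi - μj‖)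
    (hνi : ‖νi - μi‖ ≤ δ) (hνj : ‖νj - μj‖ ≤ δ) (hδD : δ ≤ D) :
    D ^ 2 - 2 * D * δ ≤ ‖μj - νi‖ ^ 2 - ‖μj - νj‖ ^ 2 := by
  have hfar : D - δ ≤ ‖μj - νi‖ := by
    have := norm_sub_le_norm_sub_add_norm_sub μi νi μj
    rw [norm_sub_rev μi νi, norm_sub_rev νi μj] at this
    linarith
  have hnear : ‖μj - νj‖ ≤ δ := norm_sub_rev μj νj ▸ hνj
  have hδ : 0 ≤ δ := (norm_nonneg _).trans hνj
  nlinarith [pow_le_pow_left₀ (by linarith) hfar 2, pow_le_pow_left₀ (norm_nonneg _) hnear 2]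

lemma norm_sub_le_add_two_mul (hμ : ‖μi - μj‖ ≤ D) (hνi : ‖νi - μi‖ ≤ δ)
    (hνj : ‖νj - μj‖ ≤ δ) : ‖νi - νj‖ ≤ D + 2 * δ := by
  have h₁ := norm_sub_le_norm_sub_add_norm_sub νi μi νj
  have h₂ := norm_sub_le_norm_sub_add_norm_sub μi μj νj
  rw [norm_sub_rev μj νj] at h₂
  linarith

end Geometry

lemma neg_sq_div_le_one_sub_sq_div_eight {σ C t : ℝ} (hσ : 0 < σ) (hC : 2 ≤ C ^ 2)
    (ht : σ ^ 2 * (C ^ 2 - 2) / 2 ≤ t) :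
    -t ^ 2 / (2 * (σ ^ 2 * (C * σ + 2 * (σ / C)) ^ 2)) ≤ 1 + -C ^ 2 / 8 := by
  have hC0 : C ≠ 0 := by rintro rfl; norm_num at hC
  have hT : 0 ≤ σ ^ 2 * (C ^ 2 - 2) / 2 := by have := sq_nonneg σ; nlinarith
  calc -t ^ 2 / (2 * (σ ^ 2 * (C * σ + 2 * (σ / C)) ^ 2))
      ≤ -(σ ^ 2 * (C ^ 2 - 2) / 2) ^ 2 / (2 * (σ ^ 2 * (C * σ + 2 * (σ / C)) ^ 2)) := by
        gcongr
    _ = -(C ^ 2 * (C ^ 2 - 2) ^ 2) / (8 * (C ^ 2 + 2) ^ 2) := by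
        field_simp
        ring
    _ ≤ 1 + -C ^ 2 / 8 := by
        -- with `u = C²`: `u (u - 2)² - (u - 8) (u + 2)² = 32 (u + 1)`
        rw [div_le_iff₀ (by positivity)]
        nlinarith [sq_nonneg C]

theorem stmt_7 :
    ∃ K C₀ : ℝ, 0 < K ∧ 0 < C₀ ∧
      ∀ (d : ℕ) (Ω : Type) (_ : MeasurableSpace Ω) (P : Measure Ω)
        (_ : IsProbabilityMeasure P) (z : Ω → EuclideanSpace ℝ (Fin d))
        (σ Cij : ℝ) (μi μj νi νj : EuclideanSpace ℝ (Fin d)),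
        0 < σ → C₀ ≤ Cij →
        IsSphericalGaussian P z σ →
        ‖μi - μj‖ = Cij * σ →
        ‖νi - μi‖ ≤ σ / Cij → ‖νj - μj‖ ≤ σ / Cij →
        (P {ω | ‖(μj + z ω) - νi‖ ≤ ‖(μj + z ω) - νj‖}).toReal ≤
          K * Real.exp (-Cij^2 / 8) := by
  refine ⟨exp 1, 2, exp_pos 1, two_pos, ?_⟩
  intro d Ω _ P _ z σ C μi μj νi νj hσ hC hz hμ hνi hνj
  have hC0 : 0 < C := by linarith
  have hδ : σ / C ≤ C * σ := by
    rw [div_le_iff₀ hC0]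
    nlinarith [mul_le_mul hC hC zero_le_two hC0.le]
  set t := (‖μj - νi‖ ^ 2 - ‖μj - νj‖ ^ 2) / 2
  have ht : σ ^ 2 * (C ^ 2 - 2) / 2 ≤ t := by
    have := sq_sub_two_mul_le_norm_sub_sq_sub_norm_sub_sq hμ.ge hνi hνj hδ
    have hCσ : (C * σ) ^ 2 - 2 * (C * σ) * (σ / C) = σ ^ 2 * (C ^ 2 - 2) := by
      field_simp
    simp only [t]
    linarith
  have hT : 0 ≤ σ ^ 2 * (C ^ 2 - 2) / 2 := by
    have : 0 ≤ C ^ 2 - 2 := by nlinarith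
    positivity
  have hw := norm_sub_le_add_two_mul hμ.le hνi hνj
  have hevent : {ω | ‖(μj + z ω) - νi‖ ≤ ‖(μj + z ω) - νj‖} = {ω | t ≤ ⟪νi - νj, z ω⟫} := by
    ext ω; exact norm_add_sub_le_norm_add_sub_iff μj (z ω) νi νj
  calc (P {ω | ‖(μj + z ω) - νi‖ ≤ ‖(μj + z ω) - νj‖}).toReal
      = P.real {ω | t ≤ ⟪νi - νj, z ω⟫} := by rw [hevent, measureReal_def]
    _ ≤ exp (-t ^ 2 / (2 * Real.toNNReal (σ ^ 2 * (C * σ + 2 * (σ / C)) ^ 2))) :=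
        (hz.hasSubgaussianMGF_inner hw).measure_ge_le (hT.trans ht)
    _ ≤ exp (1 + -C ^ 2 / 8) := by
        have : 0 < σ / C := div_pos hσ hC0
        rw [coe_toNNReal _ (by positivity)]
        gcongr
        exact neg_sq_div_le_one_sub_sq_div_eight hσ (by nlinarith) ht
    _ = exp 1 * exp (-C ^ 2 / 8) := exp_add _ _
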